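/- The number of elements a of the m-Tamari lattice T_n^(m) with μ(0̂, a) ≠ 0 equals 2^{n-1}, where 0̂ is the minimal element and μ is the Möbius function. -/

import Mathlib

open scoped Classical

/-- An `m`-Dyck sequence of height `n` (0-indexed): weakly increasing with `a i ≤ m * i`. -/
def IsDyck (m n : ℕ) (a : Fin n → ℕ) : Prop :=
  Monotone a ∧ ∀ i : Fin n, a i ≤ m * i.val

/-- `k` is the last index of the primitive subsequence of `a` at position `i`. -/
def IsPrimEnd (m n : ℕ) (a : Fin n → ℕ) (i k : Fin n) : Prop :=
  i ≤ k ∧ (∀ j : Fin n, i < j → j ≤ k → a j - a i < m * (j.val - i.val)) ∧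
    (k.val + 1 = n ∨ ∃ h : k.val + 1 < n, m * (k.val + 1 - i.val) ≤ a ⟨k.val + 1, h⟩ - a i)

/-- The covering relation of the `m`-Tamari lattice: decrease the primitive
subsequence at a position `i+1` with `a i < a (i+1)` by one. -/
def Covers (m n : ℕ) (a b : Fin n → ℕ) : Prop :=
  ∃ (i : ℕ) (h : i + 1 < n) (k : Fin n),
    a ⟨i, Nat.lt_of_succ_lt h⟩ < a ⟨i + 1, h⟩ ∧
    IsPrimEnd m n a ⟨i + 1, h⟩ k ∧
    b = fun j => if (⟨i + 1, h⟩ : Fin n) ≤ j ∧ j ≤ k then a j - 1 else a j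

/-- The order of the `m`-Tamari lattice: reflexive-transitive closure of `Covers`. -/
def TamariLE (m n : ℕ) (a b : Fin n → ℕ) : Prop :=
  Relation.ReflTransGen (Covers m n) a b

/-- The elements of the `m`-Tamari lattice `T_n^(m)`. -/
def Tam (m n : ℕ) : Type := {a : Fin n → ℕ // IsDyck m n a}

/-- `μ` is the Möbius function of `T_n^(m)`. -/
def IsMobius (m n : ℕ) (μ : Tam m n → Tam m n → ℤ) : Prop :=
  ∀ a b : Tam m n, TamariLE m n a.1 b.1 →
    ∑ᶠ c ∈ {c : Tam m n | TamariLE m n a.1 c.1 ∧ TamariLE m n c.1 b.1}, μ a c =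
      if a = b then 1 else 0

/-- The minimal element `(0, m, 2m, …, (n-1)m)` of `T_n^(m)`. -/
def botSeq (m n : ℕ) : Fin n → ℕ := fun i => m * i.val

lemma botSeq_isDyck (m n : ℕ) : IsDyck m n (botSeq m n) :=
  ⟨fun i j h => Nat.mul_le_mul_left m h, fun _ => le_rfl⟩

/-- The maximal element `(0, 0, …, 0)` of `T_n^(m)`. -/
def topSeq (n : ℕ) : Fin n → ℕ := fun _ => 0

lemma topSeq_isDyck (m n : ℕ) : IsDyck m n (topSeq n) :=
  ⟨monotone_const, fun _ => Nat.zero_le _⟩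

/-- The set `D` of indices where two sequences differ and `a` has an ascent. -/
noncomputable def Dset (n : ℕ) (a b : ℕ → ℕ) : Finset ℕ :=
  (Finset.range n).filter (fun j => 1 ≤ j ∧ a j ≠ b j ∧ a (j - 1) < a j)

/-- The quantity `ps(a, j)` from the paper, relative to a set `D` of indices. -/
noncomputable def ps (m : ℕ) (D : Finset ℕ) (a : ℕ → ℕ) (j : ℕ) : ℕ :=
  (D.filter (fun i => i < j ∧ a j - 1 - a i < m * (j - i) ∧
    ∀ k, i < k → k < j → a k - a i < m * (k - i))).card


/-!
In terms of the height `m·j - a_j`, the `m`-Tamari order has an explicit description: `a ≤ b` iff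
the height of `b` dominates that of `a` and every rise of the height of `a` over an interval, by
more than `t < m`, persists in `b`. Covering steps preserve this, and conversely one can always
lower the primitive segment at the first position where `a` and `b` differ.

With it, the join of the atoms indexed by a set `D` of positions lies below `a` iff `D` consists of
ascents of the height of `a`. So the function that is `(-1)^|D|` on the join of `D` and `0` off
joins of atoms sums over `[0̂, a]` to `∑_{D ⊆ Asc(a)} (-1)^|D| = [a = 0̂]`, hence equals `μ(0̂, ·)`,
and its support consists of the `2^(n-1)` joins of atoms.
-/

open Finset

lemma eq_of_forall_sum_le_eq {α M : Type*} [PartialOrder α] [Fintype α] [AddCancelCommMonoid M]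
    {f g : α → M} (h : ∀ a, ∑ c with c ≤ a, f c = ∑ c with c ≤ a, g c) : f = g := by
  funext a
  induction a using WellFoundedLT.induction with
  | _ a ih =>
  have hsplit : ∀ φ : α → M, ∑ c with c ≤ a, φ c = φ a + ∑ c with c < a, φ c := by
    intro φ
    rw [← add_sum_erase (univ.filter (· ≤ a)) _ (mem_filter.2 ⟨mem_univ a, le_rfl⟩)]
    congr 2
    ext c
    simp [lt_iff_le_and_ne, and_comm]
  have := h a
  rw [hsplit, hsplit, sum_congr rfl fun c hc => ih c (mem_filter.1 hc).2] at this
  exact add_right_cancel this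

section Heights

variable {m n : ℕ}

def height (m : ℕ) {n : ℕ} (a : Fin n → ℕ) (j : Fin n) : ℤ := m * j.val - a j

def HeightRise (m : ℕ) {n : ℕ} (a : Fin n → ℕ) (i k : Fin n) (t : ℕ) : Prop :=
  ∀ j, i < j → j ≤ k → (t : ℤ) < height m a j - height m a i

lemma HeightRise.mono {a b : Fin n → ℕ} {i k : Fin n} {t : ℕ}
    (h : ∀ j, i < j → j ≤ k → height m a j - height m a i ≤ height m b j - height m b i)
    (ha : HeightRise m a i k t) : HeightRise m b i k t :=
  fun j hij hjk => (ha j hij hjk).trans_le (h j hij hjk)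

def HeightLE (m : ℕ) {n : ℕ} (a b : Fin n → ℕ) : Prop :=
  (∀ j, b j ≤ a j) ∧ ∀ t < m, ∀ i k, HeightRise m a i k t → HeightRise m b i k t

lemma HeightLE.refl (a : Fin n → ℕ) : HeightLE m a a :=
  ⟨fun _ => le_rfl, fun _ _ _ _ => id⟩

lemma HeightLE.trans {a b c : Fin n → ℕ} (hab : HeightLE m a b) (hbc : HeightLE m b c) :
    HeightLE m a c :=
  ⟨fun j => (hbc.1 j).trans (hab.1 j), fun t ht i k h => hbc.2 t ht i k (hab.2 t ht i k h)⟩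

lemma IsDyck.height_nonneg {a : Fin n → ℕ} (ha : IsDyck m n a) (j : Fin n) :
    0 ≤ height m a j := by
  have := ha.2 j
  simp only [height]
  omega

lemma IsDyck.height_sub_le {a : Fin n → ℕ} (ha : IsDyck m n a) {i j : Fin n} (hij : i ≤ j) :
    height m a j - height m a i ≤ m * (j.val - i.val) := by
  have := ha.1 hij
  simp only [height]
  linarith

lemma isPrimEnd_iff {a : Fin n → ℕ} (ha : Monotone a) {p k : Fin n} :
    IsPrimEnd m n a p k ↔ p ≤ k ∧ (∀ j, p < j → j ≤ k → height m a p < height m a j) ∧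
      (k.val + 1 = n ∨ ∃ h : k.val + 1 < n, height m a ⟨k.val + 1, h⟩ ≤ height m a p) := by
  have key : ∀ j : Fin n, p ≤ j →
      ((a j - a p < m * (j.val - p.val)) ↔ height m a p < height m a j) ∧
      ((m * (j.val - p.val) ≤ a j - a p) ↔ height m a j ≤ height m a p) := by
    intro j hpj
    have h1 := ha hpj
    have h2 : p.val ≤ j.val := hpj
    simp only [height]
    constructor <;> zify [h1, h2] <;> constructor <;> intro h <;> linarith
  unfold IsPrimEnd
  refine and_congr_right fun hpk => and_congr ?_ (or_congr_right (exists_congr fun h => ?_))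
  · exact forall_congr' fun j => imp_congr_right fun hpj => imp_congr_right fun _ =>
      (key j hpj.le).1
  · exact (key ⟨k.val + 1, h⟩ (Fin.le_def.2 (Nat.le_succ_of_le hpk))).2

end Heights

section Covers

variable {m n : ℕ}

def lowerSegment (a : Fin n → ℕ) (p k : Fin n) : Fin n → ℕ :=
  fun j => if p ≤ j ∧ j ≤ k then a j - 1 else a j

lemma lowerSegment_le (a : Fin n → ℕ) (p k j : Fin n) : lowerSegment a p k j ≤ a j := by
  unfold lowerSegment
  split_ifs <;> omega

lemma height_lowerSegment {a : Fin n → ℕ} {p k : Fin n} (hpos : ∀ j, p ≤ j → j ≤ k → 0 < a j)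
    (j : Fin n) :
    height m (lowerSegment a p k) j = height m a j + if p ≤ j ∧ j ≤ k then 1 else 0 := by
  simp only [lowerSegment, height]
  split_ifs with h
  · have := hpos j h.1 h.2
    push_cast [Nat.one_le_iff_ne_zero.2 this.ne']
    ring
  · ring

lemma isDyck_lowerSegment {a : Fin n → ℕ} (ha : IsDyck m n a) {q p : Fin n}
    (hqp : q.val + 1 = p.val) (hasc : a q < a p) (k : Fin n) :
    IsDyck m n (lowerSegment a p k) := by
  refine ⟨fun j₁ j₂ h₁₂ => ?_, fun j => (lowerSegment_le a p k j).trans (ha.2 j)⟩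
  have hmono := ha.1 h₁₂
  simp only [lowerSegment]
  split_ifs with h₁ h₂ h₂
  · omega
  · omega
  · -- `j₁` lies before the segment, so `a j₁ ≤ a q < a p ≤ a j₂`
    have hj₁q : j₁ ≤ q := by
      rw [Fin.le_def]
      have : ¬ p ≤ j₁ := fun h => h₁ ⟨h, h₁₂.trans h₂.2⟩
      rw [Fin.le_def] at this
      omega
    have := ha.1 hj₁q
    have := ha.1 h₂.1
    omega
  · exact hmono

lemma heightLE_lowerSegment {a : Fin n → ℕ} (ha : IsDyck m n a) {p k : Fin n} (hp : 0 < a p)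
    (hpk : IsPrimEnd m n a p k) : HeightLE m a (lowerSegment a p k) := by
  have hpos : ∀ j, p ≤ j → j ≤ k → 0 < a j := fun j hj _ => hp.trans_le (ha.1 hj)
  obtain ⟨-, hprim, hend⟩ := (isPrimEnd_iff ha.1).1 hpk
  refine ⟨lowerSegment_le a p k, fun t _ i k' hrise => ?_⟩
  by_cases hi : p ≤ i ∧ i ≤ k
  · -- a rise starting in the segment cannot leave it: after `k` the height drops to that at `p`
    have hseg : ∀ j, i < j → j ≤ k' → j ≤ k := by
      intro j hij hjk'
      by_contra hjk
      rw [not_le, Fin.lt_def] at hjk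
      obtain hkn | ⟨hk1, hk1p⟩ := hend
      · omega
      have hpi : height m a p ≤ height m a i := by
        rcases eq_or_lt_of_le hi.1 with rfl | hpi
        · exact le_rfl
        · exact (hprim i hpi hi.2).le
      have := hrise ⟨k.val + 1, hk1⟩ (Fin.lt_def.2 (Nat.lt_succ_of_le hi.2))
        (Fin.le_def.2 (hjk.trans_le hjk'))
      omega
    refine hrise.mono fun j hij hjk' => ?_
    rw [height_lowerSegment hpos, height_lowerSegment hpos, if_pos hi,
      if_pos ⟨hi.1.trans hij.le, hseg j hij hjk'⟩]
    linarith
  · refine hrise.mono fun j _ _ => ?_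
    rw [height_lowerSegment hpos, height_lowerSegment hpos, if_neg hi]
    split_ifs <;> linarith

lemma Covers.isDyck_heightLE {a b : Fin n → ℕ} (ha : IsDyck m n a) (hab : Covers m n a b) :
    IsDyck m n b ∧ HeightLE m a b := by
  obtain ⟨i, h, k, hasc, hk, rfl⟩ := hab
  exact ⟨isDyck_lowerSegment ha rfl hasc k, heightLE_lowerSegment ha (by omega) hk⟩

lemma Covers.sum_lt {a b : Fin n → ℕ} (hab : Covers m n a b) : ∑ j, b j < ∑ j, a j := by
  obtain ⟨i, h, k, hasc, hk, rfl⟩ := hab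
  refine sum_lt_sum (fun j _ => lowerSegment_le a _ k j) ⟨⟨i + 1, h⟩, mem_univ _, ?_⟩
  simp only [le_refl, hk.1, and_self, if_true]
  omega

lemma TamariLE.isDyck_heightLE {a b : Fin n → ℕ} (ha : IsDyck m n a) (hab : TamariLE m n a b) :
    IsDyck m n b ∧ HeightLE m a b := by
  induction hab with
  | refl => exact ⟨ha, HeightLE.refl a⟩
  | tail _ hcov ih =>
    obtain ⟨hc, hac⟩ := ih
    obtain ⟨hd, hcd⟩ := hcov.isDyck_heightLE hc
    exact ⟨hd, hac.trans hcd⟩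

end Covers

section Characterization

variable {m n : ℕ}

lemma exists_isPrimEnd (a : Fin n → ℕ) (p : Fin n) : ∃ k, IsPrimEnd m n a p k := by
  let S := univ.filter fun k : Fin n =>
    p ≤ k ∧ ∀ j : Fin n, p < j → j ≤ k → a j - a p < m * (j.val - p.val)
  have hpS : p ∈ S := by
    simp only [S, mem_filter, mem_univ, le_refl, true_and]
    exact fun j hpj hjp => absurd hpj (not_lt.2 hjp)
  obtain ⟨k, hkS, hkmax⟩ := S.exists_max_image id ⟨p, hpS⟩
  simp only [S, mem_filter, mem_univ, true_and] at hkS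
  refine ⟨k, hkS.1, hkS.2, ?_⟩
  by_cases hk : k.val + 1 = n
  · exact Or.inl hk
  have hk1 : k.val + 1 < n := by omega
  refine Or.inr ⟨hk1, not_lt.1 fun hlt => ?_⟩
  -- otherwise `k + 1` would also satisfy the defining condition of `S`
  have hk1S : (⟨k.val + 1, hk1⟩ : Fin n) ∈ S := by
    simp only [S, mem_filter, mem_univ, true_and]
    refine ⟨Fin.le_def.2 (Nat.le_succ_of_le hkS.1), fun j hpj hjk => ?_⟩
    rcases Nat.lt_or_ge j.val (k.val + 1) with hj | hj
    · exact hkS.2 j hpj (Fin.le_def.2 (Nat.le_of_lt_succ hj))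
    · obtain rfl : j = ⟨k.val + 1, hk1⟩ := Fin.ext (le_antisymm hjk hj)
      exact hlt
  have := hkmax _ hk1S
  simp only [id, Fin.le_def] at this
  omega

lemma HeightLE.lt_of_lt_of_lowest {a b : Fin n → ℕ} (hab : HeightLE m a b) (ha : IsDyck m n a)
    {i j : Fin n} (hij : i < j) (hi : b i < a i) (hrise : height m a i < height m a j)
    (hlow : ∀ x, i < x → x ≤ j → height m a j ≤ height m a x) : b j < a j := by
  -- otherwise `b` would destroy the rise of `a` from `i` to `j`, whose depth is below `m`
  by_contra hj
  have hbj : b j = a j := le_antisymm (hab.1 j) (not_lt.1 hj)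
  obtain ⟨t, ht⟩ : ∃ t : ℕ, (t : ℤ) + 1 = height m a j - height m a i :=
    ⟨(height m a j - height m a i - 1).toNat, by omega⟩
  have hstep : height m a j ≤ height m a i + m := by
    have hi1 : i.val + 1 < n := by omega
    have h1 := hlow ⟨i.val + 1, hi1⟩ (Fin.lt_def.2 (Nat.lt_succ_self _)) (Fin.le_def.2 hij)
    have h2 := ha.height_sub_le (i := i) (j := ⟨i.val + 1, hi1⟩) (Fin.le_def.2 (Nat.le_succ _))
    push_cast at h2
    linarith
  have hriseb := hab.2 t (by omega) i j
    (fun x hix hxj => by linarith [hlow x hix hxj]) j hij le_rfl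
  simp only [height, hbj] at hriseb ht
  have : (b i : ℤ) + 1 ≤ a i := by exact_mod_cast hi
  linarith

lemma HeightLE.lt_of_isPrimEnd {a b : Fin n → ℕ} (hab : HeightLE m a b) (ha : IsDyck m n a)
    {p k : Fin n} (hp : b p < a p) (hpk : IsPrimEnd m n a p k) :
    ∀ j, p ≤ j → j ≤ k → b j < a j := by
  obtain ⟨-, hprim, -⟩ := (isPrimEnd_iff ha.1).1 hpk
  intro j
  induction j using WellFoundedLT.induction with
  | _ j ih =>
  intro hpj hjk
  rcases eq_or_lt_of_le hpj with rfl | hpj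
  · exact hp
  -- `i` is the last point before `j` lying below `j`
  let S := univ.filter fun x : Fin n => p ≤ x ∧ x < j ∧ height m a x < height m a j
  have hpS : p ∈ S := by simp [S, hpj, hprim j hpj hjk]
  obtain ⟨i, hiS, himax⟩ := S.exists_max_image id ⟨p, hpS⟩
  simp only [S, mem_filter, mem_univ, true_and] at hiS
  refine hab.lt_of_lt_of_lowest ha hiS.2.1 (ih i hiS.2.1 hiS.1 (hiS.2.1.le.trans hjk)) hiS.2.2
    fun x hix hxj => ?_
  rcases eq_or_lt_of_le hxj with rfl | hxj
  · exact le_rfl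
  by_contra hx
  have := himax x (by simp [S, hiS.1.trans hix.le, hxj, not_le.1 hx])
  exact absurd hix (not_lt.2 this)

lemma HeightLE.lowerSegment_left {a b : Fin n → ℕ} (hab : HeightLE m a b) {p k : Fin n}
    (hpre : ∀ q < p, b q = a q) (hseg : ∀ j, p ≤ j → j ≤ k → b j < a j) :
    HeightLE m (lowerSegment a p k) b := by
  have hpos : ∀ j, p ≤ j → j ≤ k → 0 < a j := fun j hpj hjk => Nat.zero_lt_of_lt (hseg j hpj hjk)
  have hbc : ∀ j, b j ≤ lowerSegment a p k j := by
    intro j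
    simp only [lowerSegment]
    split_ifs with h
    · have := hseg j h.1 h.2
      omega
    · exact hab.1 j
  refine ⟨hbc, fun t ht i k' hrise => ?_⟩
  by_cases hip : i < p
  · -- before the segment `b` agrees with `a`, and it lies above the lowered `a` everywhere
    have hci : lowerSegment a p k i = b i := by
      simp [lowerSegment, not_le.2 hip, hpre i hip]
    refine hrise.mono fun j _ _ => ?_
    have := hbc j
    simp only [height, hci]
    linarith
  · refine hab.2 t ht i k' (hrise.mono fun j hij _ => ?_)
    rw [height_lowerSegment hpos, height_lowerSegment hpos]
    have : p ≤ i := not_lt.1 hip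
    split_ifs with h1 h2 <;> first | linarith | exact absurd ⟨this, hij.le.trans h1.2⟩ h2

lemma HeightLE.exists_covers {a b : Fin n → ℕ} (ha : IsDyck m n a) (hb : IsDyck m n b)
    (hab : HeightLE m a b) (hne : a ≠ b) : ∃ c, Covers m n a c ∧ HeightLE m c b := by
  obtain ⟨p, hp, hpre⟩ : ∃ p, b p < a p ∧ ∀ q < p, b q = a q := by
    obtain ⟨j, hj⟩ := Function.ne_iff.1 hne
    obtain ⟨p, hp, hmin⟩ := wellFounded_lt.has_min {j | b j < a j}
      ⟨j, lt_of_le_of_ne (hab.1 j) (Ne.symm hj)⟩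
    exact ⟨p, hp, fun q hq => le_antisymm (hab.1 q) (not_lt.1 fun h => hmin q h hq)⟩
  obtain ⟨q, hq⟩ : ∃ q : Fin n, q.val + 1 = p.val := by
    have hp0 : p.val ≠ 0 := fun h0 => by have := ha.2 p; rw [h0, mul_zero] at this; omega
    exact ⟨⟨p.val - 1, by omega⟩, by simp; omega⟩
  obtain ⟨p, hpn⟩ := p
  obtain rfl : q.val + 1 = p := hq
  set p : Fin n := ⟨q.val + 1, hpn⟩
  have hqp : q < p := Fin.lt_def.2 (Nat.lt_succ_self _)
  have hasc : a q < a p := by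
    have := hb.1 hqp.le
    rw [hpre q hqp] at this
    omega
  obtain ⟨k, hk⟩ := exists_isPrimEnd (m := m) a p
  exact ⟨lowerSegment a p k, ⟨q.val, hpn, k, hasc, hk, rfl⟩,
    hab.lowerSegment_left hpre (hab.lt_of_isPrimEnd ha hp hk)⟩

lemma tamariLE_of_heightLE {a b : Fin n → ℕ} (ha : IsDyck m n a)
    (hb : IsDyck m n b) (hab : HeightLE m a b) : TamariLE m n a b := by
  induction hs : ∑ j, a j using Nat.strong_induction_on generalizing a with
  | _ s ih =>
  by_cases hne : a = b
  · exact hne ▸ Relation.ReflTransGen.refl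
  obtain ⟨c, hac, hcb⟩ := hab.exists_covers ha hb hne
  exact .head hac (ih _ (hs ▸ hac.sum_lt) (hac.isDyck_heightLE ha).1 hcb rfl)

lemma tamariLE_iff_heightLE {a b : Fin n → ℕ} (ha : IsDyck m n a)
    (hb : IsDyck m n b) : TamariLE m n a b ↔ HeightLE m a b :=
  ⟨fun h => (h.isDyck_heightLE ha).2, tamariLE_of_heightLE ha hb⟩

end Characterization

section Order

variable {m n : ℕ}

instance : PartialOrder (Tam m n) where
  le a b := TamariLE m n a.1 b.1
  le_refl _ := Relation.ReflTransGen.refl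
  le_trans _ _ _ := Relation.ReflTransGen.trans
  le_antisymm a b hab hba := Subtype.ext <| funext fun j =>
    le_antisymm ((hba.isDyck_heightLE b.2).2.1 j) ((hab.isDyck_heightLE a.2).2.1 j)

instance : Finite (Tam m n) :=
  Finite.of_injective
    (fun (a : Tam m n) (j : Fin n) => (⟨a.1 j, Nat.lt_succ_of_le
      ((a.2.2 j).trans (Nat.mul_le_mul_left m j.isLt.le))⟩ : Fin (m * n + 1)))
    fun _ _ h => Subtype.ext <| funext fun j => congrArg Fin.val (congrFun h j)

noncomputable instance : Fintype (Tam m n) := Fintype.ofFinite _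

lemma Tam.le_iff {a b : Tam m n} : a ≤ b ↔ TamariLE m n a.1 b.1 := Iff.rfl

lemma heightLE_botSeq {a : Fin n → ℕ} (ha : IsDyck m n a) :
    HeightLE m (botSeq m n) a :=
  ⟨ha.2, fun t _ i k hrise j hij hjk => absurd (hrise j hij hjk) (by simp [height, botSeq])⟩

instance : OrderBot (Tam m n) where
  bot := ⟨botSeq m n, botSeq_isDyck m n⟩
  bot_le a := tamariLE_of_heightLE (botSeq_isDyck m n) a.2 (heightLE_botSeq a.2)

lemma Tam.bot_def : (⊥ : Tam m n) = ⟨botSeq m n, botSeq_isDyck m n⟩ := rfl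

lemma IsMobius.sum_le_eq {μ : Tam m n → Tam m n → ℤ} (hμ : IsMobius m n μ)
    (a : Tam m n) : ∑ c with c ≤ a, μ ⊥ c = if ⊥ = a then 1 else 0 := by
  have hset : {c : Tam m n | TamariLE m n (⊥ : Tam m n).1 c.1 ∧ TamariLE m n c.1 a.1} =
      ↑(univ.filter (· ≤ a)) := by
    ext c
    simp [← Tam.le_iff]
  have := hμ ⊥ a (Tam.le_iff.1 bot_le)
  rwa [hset, finsum_mem_coe_finset] at this

end Order

section Atoms

variable {m n : ℕ}

def runLength (D : Finset ℕ) : ℕ → ℕ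
  | 0 => 0
  | j + 1 => if j + 1 ∈ D then runLength D j + 1 else 0

lemma runLength_le (D : Finset ℕ) (j : ℕ) : runLength D j ≤ j := by
  induction j with
  | zero => rfl
  | succ j ih => simp only [runLength]; split_ifs <;> omega

lemma runLength_succ_le (D : Finset ℕ) (j : ℕ) : runLength D (j + 1) ≤ runLength D j + 1 := by
  simp only [runLength]
  split_ifs <;> omega

lemma runLength_add_le (D : Finset ℕ) (i d : ℕ) : runLength D (i + d) ≤ runLength D i + d := by
  induction d with
  | zero => rfl
  | succ d ih => exact (runLength_succ_le D (i + d)).trans (by omega)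

lemma runLength_pos_iff {D : Finset ℕ} {j : ℕ} (hj : j ≠ 0) : 0 < runLength D j ↔ j ∈ D := by
  obtain ⟨j, rfl⟩ := Nat.exists_eq_succ_of_ne_zero hj
  simp only [runLength]
  split_ifs with h <;> simp [h]

/-- The join of the atoms `0̂ - e_r` (`r ∈ D`) of `T_n^(m)`. -/
def joinSeq (m : ℕ) {n : ℕ} (D : Finset ℕ) : Fin n → ℕ := fun j => m * j.val - runLength D j.val

lemma isDyck_joinSeq (D : Finset ℕ) : IsDyck m n (joinSeq m D) := by
  refine ⟨fun i j hij => ?_, fun j => Nat.sub_le _ _⟩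
  refine monotone_nat_of_le_succ (f := fun j => m * j - runLength D j) (fun j => ?_) hij
  have h1 := runLength_succ_le D j
  have h2 := runLength_le D j
  rcases Nat.eq_zero_or_pos m with rfl | hm
  · simp
  · have : j ≤ m * j := Nat.le_mul_of_pos_left j hm
    simp only [Nat.mul_succ]
    omega

lemma height_joinSeq (hm : 0 < m) (D : Finset ℕ) (j : Fin n) :
    height m (joinSeq m D) j = runLength D j.val := by
  have := (runLength_le D j.val).trans (Nat.le_mul_of_pos_left j.val hm)
  simp only [height, joinSeq]
  omega

def ascents (m : ℕ) {n : ℕ} (a : Fin n → ℕ) : Finset ℕ :=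
  (Ico 1 n).filter fun r => ∃ i j : Fin n, i.val + 1 = r ∧ j.val = r ∧ height m a i < height m a j

lemma mem_ascents {a : Fin n → ℕ} {r : ℕ} :
    r ∈ ascents m a ↔
      ∃ i j : Fin n, i.val + 1 = r ∧ j.val = r ∧ height m a i < height m a j := by
  simp only [ascents, mem_filter, mem_Ico, and_iff_right_iff_imp]
  rintro ⟨i, j, rfl, hj, -⟩
  omega

lemma height_lt_of_mem_ascents {a : Fin n → ℕ} {i j : Fin n} (hij : i.val + 1 = j.val)
    (hj : j.val ∈ ascents m a) : height m a i < height m a j := by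
  obtain ⟨i', j', hi', hj', hlt⟩ := mem_ascents.1 hj
  obtain rfl : i' = i := Fin.ext (by omega)
  obtain rfl : j' = j := Fin.ext hj'
  exact hlt

lemma runLength_le_height {a : Fin n → ℕ} (ha : IsDyck m n a) {D : Finset ℕ}
    (hD : D ⊆ ascents m a) (j : Fin n) : (runLength D j.val : ℤ) ≤ height m a j := by
  obtain ⟨v, hv⟩ := j
  induction v with
  | zero => simpa [runLength] using ha.height_nonneg ⟨0, hv⟩
  | succ v ih =>
    simp only [runLength]
    split_ifs with h
    · have := height_lt_of_mem_ascents (a := a) (i := ⟨v, by omega⟩) (j := ⟨v + 1, hv⟩) rfl (hD h)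
      push_cast
      linarith [ih (by omega)]
    · exact_mod_cast ha.height_nonneg _

lemma sub_le_height_sub {a : Fin n → ℕ} {i j : Fin n} (hij : i ≤ j)
    (hasc : ∀ x : Fin n, i < x → x ≤ j → x.val ∈ ascents m a) :
    (j.val - i.val : ℤ) ≤ height m a j - height m a i := by
  obtain ⟨d, hd⟩ : ∃ d, j.val = i.val + d := ⟨j.val - i.val, by rw [Fin.le_def] at hij; omega⟩
  induction d generalizing j with
  | zero => obtain rfl : j = i := Fin.ext hd; simp
  | succ d ih =>
    have hd' : i.val + d < n := by omega
    have hprev := ih (j := ⟨i.val + d, hd'⟩) (Fin.le_def.2 (Nat.le_add_right _ _))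
      (fun x hix hxj => hasc x hix (hxj.trans (Fin.le_def.2 (by simp; omega)))) rfl
    have hstep := height_lt_of_mem_ascents (a := a) (i := ⟨i.val + d, hd'⟩) (by simp; omega)
      (hasc j (Fin.lt_def.2 (by omega)) le_rfl)
    simp only at hprev
    push_cast [hd] at hprev ⊢
    linarith

lemma subset_ascents_of_heightLE_joinSeq (hm : 0 < m) {a : Fin n → ℕ} {D : Finset ℕ}
    (hD : D ⊆ Ico 1 n) (h : HeightLE m (joinSeq m D) a) : D ⊆ ascents m a := by
  intro r hr
  obtain ⟨hr1, hrn⟩ := mem_Ico.1 (hD hr)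
  obtain ⟨r, rfl⟩ := Nat.exists_eq_add_of_le' hr1
  let i : Fin n := ⟨r, by omega⟩
  let j : Fin n := ⟨r + 1, hrn⟩
  have hij : i < j := Fin.lt_def.2 (Nat.lt_succ_self r)
  -- the join rises by one from `r` to `r + 1`, so `a` must rise there too
  have hrise : HeightRise m (joinSeq m D) i j 0 := by
    intro x hix hxj
    obtain rfl : x = j := le_antisymm hxj (Fin.le_def.2 (Fin.lt_def.1 hix))
    simp [height_joinSeq hm, i, j, runLength, hr]
  have := h.2 0 hm i j hrise j hij le_rfl
  exact mem_ascents.2 ⟨i, j, rfl, rfl, by linarith⟩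

lemma heightLE_joinSeq_of_subset_ascents (hm : 0 < m) {a : Fin n → ℕ} (ha : IsDyck m n a)
    {D : Finset ℕ} (hDa : D ⊆ ascents m a) : HeightLE m (joinSeq m D) a := by
  refine ⟨fun j => ?_, fun t _ i k hrise j hij hjk => ?_⟩
  · have := runLength_le_height ha hDa j
    simp only [height, joinSeq] at this ⊢
    omega
  -- a rise of the join forces every position of `(i, j]` into `D`, hence to be an ascent of `a`
  have hrun : ∀ x, i < x → x ≤ k → (runLength D i.val + t : ℤ) < runLength D x.val :=
    fun x hix hxk => by
      have := hrise x hix hxk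
      rw [height_joinSeq hm, height_joinSeq hm] at this
      linarith
  have hasc : ∀ x : Fin n, i < x → x ≤ j → x.val ∈ ascents m a := by
    intro x hix hxj
    refine hDa ((runLength_pos_iff ?_).1 ?_)
    · rw [Fin.lt_def] at hix; omega
    · have := hrun x hix (hxj.trans hjk); omega
  have hlen := runLength_add_le D i.val (j.val - i.val)
  rw [Nat.add_sub_cancel' (Fin.le_def.1 hij.le)] at hlen
  have := sub_le_height_sub hij.le hasc
  have := hrun j hij hjk
  omega

lemma ascents_eq_empty_iff {a : Fin n → ℕ} (ha : IsDyck m n a) :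
    ascents m a = ∅ ↔ a = botSeq m n := by
  constructor
  · intro h
    -- without ascents the height never increases, so it stays at its initial value `0`
    have hzero : ∀ j : Fin n, height m a j ≤ 0 := by
      rintro ⟨v, hv⟩
      induction v with
      | zero => simp [height]
      | succ v ih =>
        have : ¬ height m a ⟨v, by omega⟩ < height m a ⟨v + 1, hv⟩ := fun hlt =>
          (eq_empty_iff_forall_notMem.1 h) (v + 1) (mem_ascents.2 ⟨_, _, rfl, rfl, hlt⟩)
        linarith [ih (by omega)]
    funext j
    have := hzero j
    have := ha.2 j
    simp only [height] at *
    simp only [botSeq]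
    omega
  · rintro rfl
    refine eq_empty_iff_forall_notMem.2 fun r hr => ?_
    obtain ⟨i, j, -, -, hlt⟩ := mem_ascents.1 hr
    simp [height, botSeq] at hlt

end Atoms

section Mobius

variable {m n : ℕ}

def joinAtoms (m n : ℕ) (D : Finset ℕ) : Tam m n := ⟨joinSeq m D, isDyck_joinSeq D⟩

lemma joinAtoms_le_iff (hm : 0 < m) (a : Tam m n) {D : Finset ℕ} (hD : D ⊆ Ico 1 n) :
    joinAtoms m n D ≤ a ↔ D ⊆ ascents m a.1 :=
  (tamariLE_iff_heightLE (isDyck_joinSeq D) a.2).trans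
    ⟨subset_ascents_of_heightLE_joinSeq hm hD, heightLE_joinSeq_of_subset_ascents hm a.2⟩

lemma joinAtoms_injOn (hm : 0 < m) : Set.InjOn (joinAtoms m n) ↑(Ico 1 n).powerset := by
  intro D hD D' hD' h
  rw [coe_powerset, Set.mem_preimage, Set.mem_powerset_iff, coe_subset] at hD hD'
  have hrun : ∀ j : Fin n, runLength D j.val = runLength D' j.val := fun j => by
    have := congrArg (fun a : Tam m n => height m a.1 j) h
    simpa [joinAtoms, height_joinSeq hm] using this
  ext r
  by_cases hr : r ∈ Ico 1 n
  · obtain ⟨hr1, hrn⟩ := mem_Ico.1 hr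
    rw [← runLength_pos_iff (by omega), ← runLength_pos_iff (by omega), hrun ⟨r, hrn⟩]
  · exact iff_of_false (fun h => hr (hD h)) (fun h => hr (hD' h))

noncomputable def signedJoinCount (m n : ℕ) (a : Tam m n) : ℤ :=
  ∑ D ∈ (Ico 1 n).powerset, if joinAtoms m n D = a then (-1) ^ #D else 0

lemma sum_signedJoinCount_le (hm : 0 < m) (a : Tam m n) :
    ∑ c with c ≤ a, signedJoinCount m n c = if ⊥ = a then 1 else 0 := by
  calc ∑ c with c ≤ a, signedJoinCount m n c
      = ∑ D ∈ (Ico 1 n).powerset, if joinAtoms m n D ≤ a then (-1) ^ #D else 0 := by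
        simp only [signedJoinCount]
        rw [sum_comm]
        refine sum_congr rfl fun D _ => ?_
        rw [sum_ite_eq]
        simp
    _ = ∑ D ∈ (ascents m a.1).powerset, (-1) ^ #D := by
        rw [← sum_filter]
        congr 1
        ext D
        simp only [mem_filter, mem_powerset]
        constructor
        · exact fun ⟨hD, hle⟩ => (joinAtoms_le_iff hm a hD).1 hle
        · exact fun hD => have hD' := hD.trans (filter_subset _ _)
            ⟨hD', (joinAtoms_le_iff hm a hD').2 hD⟩
    _ = if ⊥ = a then 1 else 0 := by
        rw [sum_powerset_neg_one_pow_card]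
        exact if_congr ((ascents_eq_empty_iff a.2).trans
          ⟨fun h => (Subtype.ext h).symm, fun h => congrArg Subtype.val h.symm⟩) rfl rfl

lemma signedJoinCount_ne_zero_iff (hm : 0 < m) {a : Tam m n} :
    signedJoinCount m n a ≠ 0 ↔ a ∈ (Ico 1 n).powerset.image (joinAtoms m n) := by
  constructor
  · intro h
    by_contra ha
    refine h (sum_eq_zero fun D hD => if_neg fun hDa => ha (mem_image.2 ⟨D, hD, hDa⟩))
  · intro ha
    obtain ⟨D, hD, rfl⟩ := mem_image.1 ha
    rw [signedJoinCount, sum_eq_single_of_mem D hD, if_pos rfl]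
    · exact pow_ne_zero _ (by norm_num)
    · exact fun D' hD' hne => if_neg fun h => hne (joinAtoms_injOn hm hD' hD h)

lemma IsMobius.bot_eq_signedJoinCount (hm : 0 < m) {μ : Tam m n → Tam m n → ℤ}
    (hμ : IsMobius m n μ) : μ ⊥ = signedJoinCount m n :=
  eq_of_forall_sum_le_eq fun a => by rw [hμ.sum_le_eq, sum_signedJoinCount_le hm]

end Mobius

theorem tamari_spherical_from_bot_count_general (m n : ℕ) (hm : 0 < m)
    (μ : Tam m n → Tam m n → ℤ) (hμ : IsMobius m n μ) :
    Nat.card {a : Tam m n // μ ⟨botSeq m n, botSeq_isDyck m n⟩ a ≠ 0} = 2 ^ (n - 1) := by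
  rw [← Tam.bot_def, hμ.bot_eq_signedJoinCount hm]
  simp_rw [signedJoinCount_ne_zero_iff hm]
  rw [Nat.card_eq_finsetCard, card_image_of_injOn (joinAtoms_injOn hm), card_powerset,
    Nat.card_Ico]

/-- The number of elements `a` of `T_n^(m)` with `μ(0̂, a) ≠ 0` is `2^(n-1)`. -/
theorem tamari_spherical_from_bot_count (m n : ℕ) (hm : 0 < m) (hn : 0 < n)
    (μ : Tam m n → Tam m n → ℤ) (hμ : IsMobius m n μ) :
    Nat.card {a : Tam m n // μ ⟨botSeq m n, botSeq_isDyck m n⟩ a ≠ 0} = 2 ^ (n - 1) :=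
  tamari_spherical_from_bot_count_general m n hm μ hμ
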